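/- arXiv:2503.03498 — 10 statements merged into one kernel-verified Lean document; each statement's English description precedes it below -/
import Mathlib

section
/- Let Q be a semi-unital and semi-integral quantale that is a factor (its only two-sided elements are ⊥ and ⊤). Then for all α, β ∈ Q and every γ ∈ Q with γ ≠ ⊥, one has α * γ * β = α * β. -/
/-- A quantale: a complete lattice with an associative multiplication that
preserves arbitrary joins in each variable. -/
class Quantale' (α : Type*) extends CompleteLattice α, Semigroup α where
  mul_sSup_eq : ∀ (a : α) (s : Set α), a * sSup s = ⨆ b ∈ s, a * b
  sSup_mul_eq : ∀ (s : Set α) (a : α), sSup s * a = ⨆ b ∈ s, b * a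

section Defs

variable {α : Type*} [Quantale' α]

/-- `a` is left-sided: `⊤ * a ≤ a`. -/
def IsLeftSided (a : α) : Prop := ⊤ * a ≤ a

/-- `a` is right-sided: `a * ⊤ ≤ a`. -/
def IsRightSided (a : α) : Prop := a * ⊤ ≤ a

/-- `a` is two-sided. -/
def IsTwoSided (a : α) : Prop := IsLeftSided a ∧ IsRightSided a

/-- A quantale is semi-unital if `a ≤ ⊤ * a` and `a ≤ a * ⊤` for all `a`. -/
def SemiUnital (α : Type*) [Quantale' α] : Prop := ∀ a : α, a ≤ ⊤ * a ∧ a ≤ a * ⊤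

/-- A quantale is semi-integral if `a * ⊤ * b ≤ a * b` for all `a`, `b`. -/
def SemiIntegral (α : Type*) [Quantale' α] : Prop := ∀ a b : α, a * ⊤ * b ≤ a * b

/-- A quantale is a factor if its only two-sided elements are `⊥` and `⊤`. -/
def IsFactor (α : Type*) [Quantale' α] : Prop := ∀ a : α, IsTwoSided a → a = ⊥ ∨ a = ⊤

/-- Prime element of a quantale. -/
def IsPrime (p : α) : Prop :=
  p ≠ ⊤ ∧ ∀ a b : α, a * b ≤ p → a * ⊤ ≤ p ∨ ⊤ * b ≤ p

/-- Strongly prime element of a quantale. -/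
def IsStronglyPrime (p : α) : Prop :=
  p ≠ ⊤ ∧ ∀ a b : α, a * b ≤ p → a ⊔ a * ⊤ ≤ p ∨ b ⊔ ⊤ * b ≤ p

/-- A quantale is spatial if every element is a meet of prime elements. -/
def Spatial (α : Type*) [Quantale' α] : Prop :=
  ∀ a : α, ∃ S : Set α, (∀ p ∈ S, IsPrime p) ∧ a = sInf S

/-- A quantale is strongly spatial if every element is a meet of strongly prime elements. -/
def StronglySpatial (α : Type*) [Quantale' α] : Prop :=
  ∀ a : α, ∃ S : Set α, (∀ p ∈ S, IsStronglyPrime p) ∧ a = sInf S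

end Defs

/-
The element `⊤ * γ * ⊤` is always two-sided, and semi-unitality gives `γ ≤ ⊤ * γ * ⊤`, so in a
factor it equals `⊤` as soon as `γ ≠ ⊥`. Semi-integrality lets one delete a `⊤` standing between
two factors, hence `α * β ≤ α * ⊤ * β = α * ⊤ * γ * ⊤ * β ≤ α * γ * β`; the reverse inequality
`α * γ * β ≤ α * ⊤ * β ≤ α * β` is semi-integrality again.
-/

instance Quantale'.instIsQuantale {Q : Type*} [Quantale' Q] : IsQuantale Q :=
  ⟨Quantale'.mul_sSup_eq, Quantale'.sSup_mul_eq⟩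

section Factor

variable {Q : Type*} [Quantale' Q]

theorem isTwoSided_top_mul_mul_top (γ : Q) : IsTwoSided (⊤ * γ * ⊤) := by
  constructor
  · calc ⊤ * (⊤ * γ * ⊤) = ⊤ * ⊤ * γ * ⊤ := by simp only [mul_assoc]
      _ ≤ ⊤ * γ * ⊤ := by gcongr; exact le_top
  · calc ⊤ * γ * ⊤ * ⊤ = ⊤ * γ * (⊤ * ⊤) := mul_assoc _ _ _
      _ ≤ ⊤ * γ * ⊤ := by gcongr; exact le_top

theorem SemiUnital.le_top_mul_mul_top (hsu : SemiUnital Q) (γ : Q) : γ ≤ ⊤ * γ * ⊤ :=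
  (hsu γ).1.trans (hsu (⊤ * γ)).2

theorem IsFactor.top_mul_mul_top_eq_top (hf : IsFactor Q) (hsu : SemiUnital Q) {γ : Q}
    (hγ : γ ≠ ⊥) : ⊤ * γ * ⊤ = ⊤ :=
  (hf _ (isTwoSided_top_mul_mul_top γ)).resolve_left fun h ↦
    hγ (le_bot_iff.mp (h ▸ hsu.le_top_mul_mul_top γ))

theorem SemiIntegral.mul_mul_le (hsi : SemiIntegral Q) (α γ β : Q) : α * γ * β ≤ α * β :=
  calc α * γ * β ≤ α * ⊤ * β := by gcongr; exact le_top
    _ ≤ α * β := hsi α β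

theorem SemiIntegral.mul_top_mul_mul_top_mul_le (hsi : SemiIntegral Q) (α γ β : Q) :
    α * (⊤ * γ * ⊤) * β ≤ α * γ * β :=
  calc α * (⊤ * γ * ⊤) * β = α * ⊤ * γ * ⊤ * β := by simp only [mul_assoc]
    _ ≤ α * γ * ⊤ * β := by gcongr ?_ * ⊤ * β; exact hsi α γ
    _ ≤ α * γ * β := hsi (α * γ) β

end Factor

/-- In a semi-unital, semi-integral factor quantale,
`α * γ * β = α * β` whenever `γ ≠ ⊥`. -/
theorem stmt0 {Q : Type*} [Quantale' Q] (hsu : SemiUnital Q) (hsi : SemiIntegral Q)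
    (hf : IsFactor Q) :
    ∀ α β γ : Q, γ ≠ ⊥ → α * γ * β = α * β := by
  intro α β γ hγ
  refine le_antisymm (hsi.mul_mul_le α γ β) ?_
  calc α * β ≤ α * ⊤ * β := by gcongr; exact (hsu α).2
    _ = α * (⊤ * γ * ⊤) * β := by rw [hf.top_mul_mul_top_eq_top hsu hγ]
    _ ≤ α * γ * β := hsi.mul_top_mul_mul_top_mul_le α γ β
end

section
/- Let Q be a semi-unital quantale. If the subquantale 𝕀(Q) of two-sided elements of Q has no zero divisors, then the subquantale 𝕃(Q) of left-sided elements also has no zero divisors; i.e., for left-sided α, β with α ≠ ⊥ and β ≠ ⊥, one has α * β ≠ ⊥. -/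
/-!
Left-sided `α` and `β` give two-sided elements `α * ⊤` and `β * ⊤`, which semi-unitality keeps
nonzero. Their product lies below `α * (⊤ * β) * ⊤ ≤ α * β * ⊤`, so `α * β = ⊥` would make it `⊥`.
-/

namespace Quantale'

variable {Q : Type*} [Quantale' Q]

theorem mul_sup (a b c : Q) : a * (b ⊔ c) = a * b ⊔ a * c := by
  rw [← sSup_pair, mul_sSup_eq, iSup_pair]

theorem sup_mul (a b c : Q) : (a ⊔ b) * c = a * c ⊔ b * c := by
  rw [← sSup_pair, sSup_mul_eq, iSup_pair]

theorem mul_le_mul_left {b c : Q} (h : b ≤ c) (a : Q) : a * b ≤ a * c :=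
  calc a * b ≤ a * b ⊔ a * c := le_sup_left
    _ = a * c := by rw [← Quantale'.mul_sup, sup_eq_right.2 h]

theorem mul_le_mul_right {a b : Q} (h : a ≤ b) (c : Q) : a * c ≤ b * c :=
  calc a * c ≤ a * c ⊔ b * c := le_sup_left
    _ = b * c := by rw [← Quantale'.sup_mul, sup_eq_right.2 h]

theorem bot_mul (a : Q) : ⊥ * a = ⊥ := by
  simpa using sSup_mul_eq ∅ a

theorem isTwoSided_mul_top {a : Q} (ha : IsLeftSided a) : IsTwoSided (a * ⊤) :=
  ⟨by rw [IsLeftSided, ← mul_assoc]; exact mul_le_mul_right ha ⊤,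
   by rw [IsRightSided, mul_assoc]; exact mul_le_mul_left le_top a⟩

theorem mul_top_ne_bot (hsu : SemiUnital Q) {a : Q} (ha : a ≠ ⊥) : a * ⊤ ≠ ⊥ :=
  fun h ↦ ha (le_bot_iff.1 (h ▸ (hsu a).2))

theorem mul_top_mul_mul_top_le {b : Q} (hb : IsLeftSided b) (a : Q) :
    a * ⊤ * (b * ⊤) ≤ a * b * ⊤ :=
  calc a * ⊤ * (b * ⊤) = a * (⊤ * b) * ⊤ := by simp only [mul_assoc]
    _ ≤ a * b * ⊤ := mul_le_mul_right (mul_le_mul_left hb a) ⊤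

end Quantale'

open Quantale' in
/-- In a semi-unital quantale, if the two-sided elements have no zero
divisors, then neither do the left-sided elements. -/
theorem stmt1 {Q : Type*} [Quantale' Q] (hsu : SemiUnital Q)
    (hI : ∀ x y : Q, IsTwoSided x → IsTwoSided y → x ≠ ⊥ → y ≠ ⊥ → x * y ≠ ⊥) :
    ∀ α β : Q, IsLeftSided α → IsLeftSided β → α ≠ ⊥ → β ≠ ⊥ → α * β ≠ ⊥ := by
  intro α β hα hβ hα_ne hβ_ne hαβ
  refine hI (α * ⊤) (β * ⊤) (isTwoSided_mul_top hα) (isTwoSided_mul_top hβ)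
    (mul_top_ne_bot hsu hα_ne) (mul_top_ne_bot hsu hβ_ne) (le_bot_iff.1 ?_)
  simpa [hαβ, bot_mul] using mul_top_mul_mul_top_le hβ α
end

section
/- Let Q be a semi-unital quantale such that the subquantale 𝕃(Q) of left-sided elements has no zero divisors. Then for every α ∈ Q with α ≠ ⊥ and every left-sided β ≠ ⊥, one has α * β ≠ ⊥. -/
instance Quantale'.toIsQuantale (Q : Type*) [Quantale' Q] : IsQuantale Q :=
  ⟨Quantale'.mul_sSup_eq, Quantale'.sSup_mul_eq⟩

section

variable {Q : Type*} [Quantale' Q]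

theorem isLeftSided_top_mul (a : Q) : IsLeftSided (⊤ * a) := by
  rw [IsLeftSided, ← mul_assoc]
  exact mul_le_mul_left (le_top : ⊤ * ⊤ ≤ ⊤) a

theorem SemiUnital.eq_bot_of_top_mul_eq_bot (hsu : SemiUnital Q) {a : Q} (h : ⊤ * a = ⊥) :
    a = ⊥ :=
  le_bot_iff.mp (h ▸ (hsu a).1)

end

/-- In a semi-unital quantale whose left-sided elements have no zero
divisors, `α * β ≠ ⊥` for any `α ≠ ⊥` and any left-sided `β ≠ ⊥`. -/
theorem stmt2 {Q : Type*} [Quantale' Q] (hsu : SemiUnital Q)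
    (hL : ∀ x y : Q, IsLeftSided x → IsLeftSided y → x * y = ⊥ → x = ⊥ ∨ y = ⊥) :
    ∀ α β : Q, α ≠ ⊥ → IsLeftSided β → β ≠ ⊥ → α * β ≠ ⊥ := by
  intro α β hα hβL hβ hαβ
  have htop : ⊤ * α * β = ⊥ := by rw [mul_assoc, hαβ, Quantale.mul_bot]
  rcases hL _ _ (isLeftSided_top_mul α) hβL htop with h | h
  · exact hα (hsu.eq_bot_of_top_mul_eq_bot h)
  · exact hβ h
end

section
/- Every strongly spatial quantale is semi-unital, i.e., α ≤ ⊤ * α and α ≤ α * ⊤ for all α. -/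
/-!
A strongly prime `p` above `⊤ * a` must contain `a`: strong primality applied to the
factorisation `⊤ * a` cannot choose the branch containing `⊤`, since `p ≠ ⊤`. As `⊤ * a`
is the meet of the strongly prime elements above it, `a ≤ ⊤ * a`; symmetrically on the right.
-/

section StronglyPrime

variable {α : Type*} [Quantale' α] {a p : α}

theorem IsStronglyPrime.le_of_top_mul_le (hp : IsStronglyPrime p) (h : ⊤ * a ≤ p) : a ≤ p := by
  rcases hp.2 ⊤ a h with htop | ha
  · exact absurd (top_le_iff.mp (le_sup_left.trans htop)) hp.1
  · exact le_sup_left.trans ha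

theorem IsStronglyPrime.le_of_mul_top_le (hp : IsStronglyPrime p) (h : a * ⊤ ≤ p) : a ≤ p := by
  rcases hp.2 a ⊤ h with ha | htop
  · exact le_sup_left.trans ha
  · exact absurd (top_le_iff.mp (le_sup_left.trans htop)) hp.1

theorem StronglySpatial.le_of_forall_isStronglyPrime (hα : StronglySpatial α) {a b : α}
    (H : ∀ p, IsStronglyPrime p → b ≤ p → a ≤ p) : a ≤ b := by
  obtain ⟨S, hS, rfl⟩ := hα b
  exact le_sInf fun p hp => H p (hS p hp) (sInf_le hp)

end StronglyPrime

/-- Every strongly spatial quantale is semi-unital. -/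
theorem stmt5 {Q : Type*} [Quantale' Q] (h : StronglySpatial Q) : SemiUnital Q := by
  intro a
  exact ⟨h.le_of_forall_isStronglyPrime fun _ hp => hp.le_of_top_mul_le,
    h.le_of_forall_isStronglyPrime fun _ hp => hp.le_of_mul_top_le⟩
end

section
/- Every strongly spatial quantale is pre-idempotent: α ≤ α * α for all α. -/
theorem IsStronglyPrime.le_of_mul_self_le {α : Type*} [Quantale' α] {p a : α}
    (hp : IsStronglyPrime p) (h : a * a ≤ p) : a ≤ p := by
  rcases hp.2 a a h with ha | ha <;> exact le_sup_left.trans ha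

/-- Every strongly spatial quantale is pre-idempotent. -/
theorem stmt7 {Q : Type*} [Quantale' Q] (h : StronglySpatial Q) :
    ∀ a : Q, a ≤ a * a := by
  intro a
  obtain ⟨S, hS, hS_inf⟩ := h (a * a)
  rw [hS_inf]
  exact le_sInf fun p hp => (hS p hp).le_of_mul_self_le (hS_inf ▸ sInf_le hp)
end

section
/- If a strongly spatial quantale is left-sided (⊤ * α ≤ α for all α), then it is idempotent: α * α = α for all α. -/
/-! Left-sidedness bounds `a * a` by `⊤ * a ≤ a`; strong spatiality gives the reverse inequality,
since a strongly prime `p` with `a * a ≤ p` already lies above `a`. -/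

theorem Quantale'.mul_le_mul_right_s8 {α : Type*} [Quantale' α] {a b : α} (hab : a ≤ b) (c : α) :
    a * c ≤ b * c := by
  calc a * c ≤ ⨆ x ∈ ({a, b} : Set α), x * c := le_iSup₂_of_le a (Set.mem_insert a {b}) le_rfl
    _ = b * c := by rw [← Quantale'.sSup_mul_eq, sSup_pair, sup_of_le_right hab]

theorem StronglySpatial.le_mul_self {α : Type*} [Quantale' α] (h : StronglySpatial α) (a : α) :
    a ≤ a * a := by
  obtain ⟨S, hS, hEq⟩ := h (a * a)
  rw [hEq]
  exact le_sInf fun p hp => (hS p hp).le_of_mul_self_le (hEq ▸ sInf_le hp)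

/-- A left-sided strongly spatial quantale is idempotent. -/
theorem stmt8 {Q : Type*} [Quantale' Q] (h : StronglySpatial Q)
    (hl : ∀ a : Q, IsLeftSided a) :
    ∀ a : Q, a * a = a :=
  fun a => le_antisymm ((Quantale'.mul_le_mul_right_s8 le_top a).trans (hl a)) (h.le_mul_self a)
end

section
/- The trivial quantale on the 3-chain {⊥, a, ⊤} with multiplication x * y = ⊥ whenever x, y ≤ ⊤ (i.e., the constant-⊥ multiplication) is spatial but not strongly spatial: both ⊥ and a are prime, but ⊥ is not strongly prime. -/
/-- The trivial quantale on the 3-chain `Fin 3 = {⊥ = 0 < 1 < 2 = ⊤}`: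
the multiplication is constantly `⊥`. -/
noncomputable instance trivialC3Quantale : Quantale' (Fin 3) :=
  { (inferInstance : CompleteLattice (Fin 3)) with
    mul := fun _ _ => ⊥
    mul_assoc := fun _ _ _ => rfl
    mul_sSup_eq := fun a s => by
      show (⊥ : Fin 3) = ⨆ b ∈ s, (⊥ : Fin 3)
      simp
    sSup_mul_eq := fun s a => by
      show (⊥ : Fin 3) = ⨆ b ∈ s, (⊥ : Fin 3)
      simp }

/-!
The multiplication of the trivial quantale is constantly `⊥`, so the prime condition
`x * ⊤ ≤ p` holds for every `x`, and every `p ≠ ⊤` is prime; any element is then the meet of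
itself (or of nothing, for `⊤`). Strong primality, tested on `x = y = ⊤`, would force
`⊤ ≤ p`, so in a quantale with `⊤ * ⊤ = ⊥` there are no strongly prime elements at all,
and `⊥ ≠ ⊤` is not a meet of them.
-/

section Quantale

variable {α : Type*} [Quantale' α]

theorem isPrime_of_mul_top_eq_bot (hmul : ∀ a : α, a * ⊤ = ⊥) {p : α} (hp : p ≠ ⊤) :
    IsPrime p :=
  ⟨hp, fun a _ _ => Or.inl ((hmul a).symm ▸ bot_le)⟩

theorem spatial_of_forall_ne_top_isPrime (h : ∀ p : α, p ≠ ⊤ → IsPrime p) : Spatial α :=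
  fun a => ⟨{a} \ {⊤}, fun _ hp => h _ hp.2, by rw [sInf_sdiff_singleton_top, sInf_singleton]⟩

theorem IsStronglyPrime.not_top_mul_top_le {p : α} (hp : IsStronglyPrime p) : ¬ ⊤ * ⊤ ≤ p := by
  intro h
  have htop : (⊤ : α) ≤ p := by
    rcases hp.2 ⊤ ⊤ h with h' | h' <;> exact le_sup_left.trans h'
  exact hp.1 (top_le_iff.mp htop)

theorem StronglySpatial.eq_top_of_top_mul_top_le (hα : StronglySpatial α) {a : α}
    (ha : ⊤ * ⊤ ≤ a) : a = ⊤ := by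
  obtain ⟨S, hS, rfl⟩ := hα a
  exact sInf_eq_top.mpr fun p hpS =>
    absurd (ha.trans (sInf_le hpS)) (hS p hpS).not_top_mul_top_le

end Quantale

/-- The trivial quantale on the 3-chain is spatial (both `⊥` and the
middle element `1` are prime) but not strongly spatial (`⊥` is not strongly prime). -/
theorem stmt9 :
    IsPrime (⊥ : Fin 3) ∧ IsPrime (1 : Fin 3) ∧ Spatial (Fin 3) ∧
    ¬ IsStronglyPrime (⊥ : Fin 3) ∧ ¬ StronglySpatial (Fin 3) := by
  have hprime : ∀ p : Fin 3, p ≠ ⊤ → IsPrime p := fun _ =>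
    isPrime_of_mul_top_eq_bot fun _ => rfl
  have hbot_ne_top : (⊥ : Fin 3) ≠ ⊤ := by decide
  exact ⟨hprime ⊥ hbot_ne_top, hprime 1 (by decide), spatial_of_forall_ne_top_isPrime hprime,
    fun h => h.not_top_mul_top_le le_rfl,
    fun h => hbot_ne_top (h.eq_top_of_top_mul_top_le le_rfl)⟩
end

section
/- Let Q and R be quantales and let ϑ_Q : Q → R and ϑ_R : R → Q be join-preserving maps that are anti-homomorphisms (ϑ(α * β) = ϑ(β) * ϑ(α)) with ϑ_R ∘ ϑ_Q = id_Q and ϑ_Q ∘ ϑ_R = id_R. Then the map ℓ on the tensor product Q ⊗ R determined on elementary tensors by ℓ(α ⊗ β) = ϑ_R(β) ⊗ ϑ_Q(α) is a join-preserving anti-homomorphism with ℓ ∘ ℓ = id, making Q ⊗ R an involutive quantale. -/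
/-!
The involution is obtained from the universal property of `Q ⊗ R`, applied to the join-bimorphism
`(α, β) ↦ ϑR β ⊗ ϑQ α`. Both `ℓ ∘ ℓ = id` and `ℓ (x ⋆ y) = ℓ y ⋆ ℓ x` are equalities between maps
that preserve joins in each variable and that hold on elementary tensors; the uniqueness part of
the universal property then extends them from elementary tensors to all of `Q ⊗ R`.
-/

section PreservesJoins

variable {α β γ : Type*} [CompleteLattice α] [CompleteLattice β] [CompleteLattice γ]

def PreservesJoins (g : α → β) : Prop :=
  ∀ s : Set α, g (sSup s) = ⨆ x ∈ s, g x

theorem PreservesJoins.map_biSup {g : α → β} (hg : PreservesJoins g) {ι : Type*}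
    (s : Set ι) (f : ι → α) : g (⨆ i ∈ s, f i) = ⨆ i ∈ s, g (f i) := by
  rw [← sSup_image, hg, iSup_image]

theorem PreservesJoins.id : PreservesJoins (id : α → α) := fun _ => sSup_eq_iSup

theorem PreservesJoins.comp {g : β → γ} {h : α → β} (hg : PreservesJoins g)
    (hh : PreservesJoins h) : PreservesJoins (g ∘ h) := fun s => by
  rw [Function.comp_apply, hh, hg.map_biSup]
  rfl

end PreservesJoins

theorem Quantale'.preservesJoins_mul_left {α : Type*} [Quantale' α] (a : α) :
    PreservesJoins (a * ·) :=
  Quantale'.mul_sSup_eq a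

theorem Quantale'.preservesJoins_mul_right {α : Type*} [Quantale' α] (a : α) :
    PreservesJoins (· * a) :=
  fun s => Quantale'.sSup_mul_eq s a

section TensorProduct

variable {Q R T : Type u} [CompleteLattice Q] [CompleteLattice R] [CompleteLattice T]

def HasTensorUniversalProperty (tmul : Q → R → T) : Prop :=
  ∀ (S : Type u) [CompleteLattice S] (f : Q → R → S),
    (∀ b, PreservesJoins (f · b)) → (∀ a, PreservesJoins (f a)) →
    ∃! g : T → S, PreservesJoins g ∧ ∀ a b, g (tmul a b) = f a b

variable {tmul : Q → R → T}

theorem HasTensorUniversalProperty.hom_ext (huniv : HasTensorUniversalProperty tmul)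
    (htmulL : ∀ b : R, PreservesJoins (tmul · b))
    (htmulR : ∀ a : Q, PreservesJoins (tmul a))
    {S : Type u} [CompleteLattice S] {g h : T → S} (hg : PreservesJoins g)
    (hh : PreservesJoins h) (hgh : ∀ a b, g (tmul a b) = h (tmul a b)) : g = h :=
  (huniv S (fun a b => h (tmul a b)) (fun b => hh.comp (htmulL b))
    (fun a => hh.comp (htmulR a))).unique ⟨hg, hgh⟩ ⟨hh, fun _ _ => rfl⟩

theorem HasTensorUniversalProperty.bihom_ext (huniv : HasTensorUniversalProperty tmul)
    (htmulL : ∀ b : R, PreservesJoins (tmul · b))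
    (htmulR : ∀ a : Q, PreservesJoins (tmul a))
    {S : Type u} [CompleteLattice S] {g h : T → T → S}
    (hgL : ∀ y, PreservesJoins (g · y)) (hgR : ∀ x, PreservesJoins (g x))
    (hhL : ∀ y, PreservesJoins (h · y)) (hhR : ∀ x, PreservesJoins (h x))
    (hgh : ∀ a b c d, g (tmul a b) (tmul c d) = h (tmul a b) (tmul c d)) : g = h := by
  have on_elementary_right : ∀ c d x, g x (tmul c d) = h x (tmul c d) := fun c d =>
    congrFun (huniv.hom_ext htmulL htmulR (hgL _) (hhL _) fun a b => hgh a b c d)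
  funext x
  exact huniv.hom_ext htmulL htmulR (hgR x) (hhR x) fun c d => on_elementary_right c d x

end TensorProduct

theorem stmt11_general {Q R T : Type u} [Quantale' Q] [Quantale' R] [Quantale' T]
    (tmul : Q → R → T)
    (htmulL : ∀ (s : Set Q) (b : R), tmul (sSup s) b = ⨆ a ∈ s, tmul a b)
    (htmulR : ∀ (a : Q) (s : Set R), tmul a (sSup s) = ⨆ b ∈ s, tmul a b)
    (htmulMul : ∀ (a₁ a₂ : Q) (b₁ b₂ : R),
      tmul a₁ b₁ * tmul a₂ b₂ = tmul (a₁ * a₂) (b₁ * b₂))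
    (huniv : ∀ (S : Type u) [CompleteLattice S] (f : Q → R → S),
      (∀ (s : Set Q) (b : R), f (sSup s) b = ⨆ a ∈ s, f a b) →
      (∀ (a : Q) (s : Set R), f a (sSup s) = ⨆ b ∈ s, f a b) →
      ∃! g : T → S, (∀ s : Set T, g (sSup s) = ⨆ x ∈ s, g x) ∧ ∀ a b, g (tmul a b) = f a b)
    (ϑQ : Q → R) (ϑR : R → Q)
    (hϑQjoin : ∀ s : Set Q, ϑQ (sSup s) = ⨆ a ∈ s, ϑQ a)
    (hϑRjoin : ∀ s : Set R, ϑR (sSup s) = ⨆ b ∈ s, ϑR b)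
    (hϑQanti : ∀ a b : Q, ϑQ (a * b) = ϑQ b * ϑQ a)
    (hϑRanti : ∀ a b : R, ϑR (a * b) = ϑR b * ϑR a)
    (hRQ : ∀ a : Q, ϑR (ϑQ a) = a) (hQR : ∀ b : R, ϑQ (ϑR b) = b) :
    ∃ ℓ : T → T,
      (∀ (a : Q) (b : R), ℓ (tmul a b) = tmul (ϑR b) (ϑQ a)) ∧
      (∀ s : Set T, ℓ (sSup s) = ⨆ x ∈ s, ℓ x) ∧
      (∀ x : T, ℓ (ℓ x) = x) ∧
      (∀ x y : T, ℓ (x * y) = ℓ y * ℓ x) := by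
  have htmulL' : ∀ b : R, PreservesJoins (tmul · b) := fun b s => htmulL s b
  have htmulR' : ∀ a : Q, PreservesJoins (tmul a) := htmulR
  have huniv' : HasTensorUniversalProperty tmul :=
    fun S _ f hfL hfR => huniv S f (fun s b => hfL b s) hfR
  obtain ⟨ℓ, ⟨hℓjoin, hℓtmul⟩, -⟩ := huniv' T (fun a b => tmul (ϑR b) (ϑQ a))
    (fun b => (htmulR' (ϑR b)).comp hϑQjoin) (fun a => (htmulL' (ϑQ a)).comp hϑRjoin)
  have hinvolutive : ℓ ∘ ℓ = id := by
    refine huniv'.hom_ext htmulL' htmulR' (hℓjoin.comp hℓjoin) PreservesJoins.id ?_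
    intro a b
    simp only [Function.comp_apply, hℓtmul, hRQ, hQR, id]
  have hanti : (fun x y => ℓ (x * y)) = fun x y => ℓ y * ℓ x := by
    refine huniv'.bihom_ext htmulL' htmulR'
      (fun y => hℓjoin.comp (Quantale'.preservesJoins_mul_right y))
      (fun x => hℓjoin.comp (Quantale'.preservesJoins_mul_left x))
      (fun y => (Quantale'.preservesJoins_mul_left (ℓ y)).comp hℓjoin)
      (fun x => (Quantale'.preservesJoins_mul_right (ℓ x)).comp hℓjoin) ?_
    intro a b c d
    simp only [htmulMul, hℓtmul, hϑQanti, hϑRanti]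
  exact ⟨ℓ, hℓtmul, hℓjoin, congrFun hinvolutive, fun x y => congrFun₂ hanti x y⟩

/-- If `ϑQ : Q → R` and `ϑR : R → Q` are mutually inverse join-preserving
anti-homomorphisms, then the map `ℓ` determined on elementary tensors of the tensor
product `T = Q ⊗ R` by `ℓ(α ⊗ β) = ϑR β ⊗ ϑQ α` is a join-preserving anti-homomorphism
with `ℓ ∘ ℓ = id`, i.e. an involution on `Q ⊗ R`.

The tensor product is axiomatized: `T` is a quantale, `tmul` is a join-bimorphism whose
elementary tensors multiply componentwise and join-generate `T`, and `(T, tmul)` has the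
universal property of the tensor product of complete lattices. -/
theorem stmt11 {Q R T : Type u} [Quantale' Q] [Quantale' R] [Quantale' T]
    (tmul : Q → R → T)
    (htmulL : ∀ (s : Set Q) (b : R), tmul (sSup s) b = ⨆ a ∈ s, tmul a b)
    (htmulR : ∀ (a : Q) (s : Set R), tmul a (sSup s) = ⨆ b ∈ s, tmul a b)
    (htmulMul : ∀ (a₁ a₂ : Q) (b₁ b₂ : R),
      tmul a₁ b₁ * tmul a₂ b₂ = tmul (a₁ * a₂) (b₁ * b₂))
    (hgen : ∀ t : T, ∃ s : Set (Q × R), t = ⨆ p ∈ s, tmul p.1 p.2)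
    (huniv : ∀ (S : Type u) [CompleteLattice S] (f : Q → R → S),
      (∀ (s : Set Q) (b : R), f (sSup s) b = ⨆ a ∈ s, f a b) →
      (∀ (a : Q) (s : Set R), f a (sSup s) = ⨆ b ∈ s, f a b) →
      ∃! g : T → S, (∀ s : Set T, g (sSup s) = ⨆ x ∈ s, g x) ∧ ∀ a b, g (tmul a b) = f a b)
    (ϑQ : Q → R) (ϑR : R → Q)
    (hϑQjoin : ∀ s : Set Q, ϑQ (sSup s) = ⨆ a ∈ s, ϑQ a)
    (hϑRjoin : ∀ s : Set R, ϑR (sSup s) = ⨆ b ∈ s, ϑR b)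
    (hϑQanti : ∀ a b : Q, ϑQ (a * b) = ϑQ b * ϑQ a)
    (hϑRanti : ∀ a b : R, ϑR (a * b) = ϑR b * ϑR a)
    (hRQ : ∀ a : Q, ϑR (ϑQ a) = a) (hQR : ∀ b : R, ϑQ (ϑR b) = b) :
    ∃ ℓ : T → T,
      (∀ (a : Q) (b : R), ℓ (tmul a b) = tmul (ϑR b) (ϑQ a)) ∧
      (∀ s : Set T, ℓ (sSup s) = ⨆ x ∈ s, ℓ x) ∧
      (∀ x : T, ℓ (ℓ x) = x) ∧
      (∀ x y : T, ℓ (x * y) = ℓ y * ℓ x) :=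
  stmt11_general tmul htmulL htmulR htmulMul huniv ϑQ ϑR hϑQjoin hϑRjoin hϑQanti hϑRanti hRQ hQR
end

section
/- For any quantale (Q, m), the tensor product Q ⊗ Q of Q with its opposite quantale, i.e. Q ⊗ Q with multiplication determined by (α₁ ⊗ β₁) ⋆ (α₂ ⊗ β₂) = (α₁ * α₂) ⊗ (β₂ * β₁), is an involutive quantale with involution given by the symmetry c(α ⊗ β) = β ⊗ α. Moreover, if Q is balanced (⊤ * ⊤ = ⊤), then the map α ↦ α ⊗ ⊤ is an injective quantale homomorphism from Q into this involutive quantale preserving ⊤; hence every balanced quantale embeds into an involutive quantale. -/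
/-!
Most of the argument is the uniqueness half of the universal property: two join-preserving maps
out of the tensor product that agree on elementary tensors are equal. The symmetry `c` squares to
a map fixing elementary tensors, hence to the identity; `c (x * y) = c y * c x` is proved first
for elementary `x` and `y`, then extended in `y` and finally in `x`. Injectivity of `a ↦ a ⊗ ⊤`
comes from the bimorphism `(a, b) ↦ a` if `b ≠ ⊥`, `⊥` otherwise, and `⊤ ⊗ ⊤ = ⊤` from
factoring the tensor map through the interval `Iic (⊤ ⊗ ⊤)`.
-/

universe u

section SSupMaps

variable {α β γ : Type*} [CompleteLattice α] [CompleteLattice β] [CompleteLattice γ]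

def IsSSupHom (g : α → β) : Prop :=
  ∀ s : Set α, g (sSup s) = ⨆ x ∈ s, g x

def IsSSupBimorphism (f : α → β → γ) : Prop :=
  (∀ b, IsSSupHom fun a => f a b) ∧ ∀ a, IsSSupHom (f a)

theorem isSSupHom_id : IsSSupHom (id : α → α) := fun _ => sSup_eq_iSup

namespace IsSSupHom

variable {g : β → γ} {h : α → β}

theorem map_biSup (hg : IsSSupHom g) {ι : Type*} (s : Set ι) (f : ι → β) :
    g (⨆ i ∈ s, f i) = ⨆ i ∈ s, g (f i) := by
  rw [← sSup_image, hg, iSup_image]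

theorem comp (hg : IsSSupHom g) (hh : IsSSupHom h) : IsSSupHom (g ∘ h) := fun s => by
  rw [Function.comp_apply, hh, hg.map_biSup]
  rfl

theorem monotone (hg : IsSSupHom g) : Monotone g := fun a b hab => by
  have hb : g b = ⨆ x ∈ ({a, b} : Set β), g x := by rw [← hg, sSup_pair, sup_of_le_right hab]
  rw [hb]
  exact le_iSup₂_of_le a (Set.mem_insert a _) le_rfl

end IsSSupHom

namespace IsSSupBimorphism

variable {f : α → β → γ}

theorem comp {δ : Type*} [CompleteLattice δ] {g : γ → δ} (hg : IsSSupHom g)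
    (hf : IsSSupBimorphism f) : IsSSupBimorphism fun a b => g (f a b) :=
  ⟨fun b => hg.comp (hf.1 b), fun a => hg.comp (hf.2 a)⟩

theorem flip (hf : IsSSupBimorphism f) : IsSSupBimorphism (flip f) :=
  ⟨hf.2, hf.1⟩

theorem apply_le_top_top (hf : IsSSupBimorphism f) (a : α) (b : β) : f a b ≤ f ⊤ ⊤ :=
  ((hf.1 b).monotone le_top).trans ((hf.2 ⊤).monotone le_top)

end IsSSupBimorphism

theorem isSSupBimorphism_iSup_ne_bot :
    IsSSupBimorphism fun (a : α) (b : β) => ⨆ _ : b ≠ ⊥, a := by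
  refine ⟨fun b s => ?_, fun a s => ?_⟩
  · simp only [sSup_eq_iSup]
    exact iSup_comm.trans (iSup_congr fun _ => iSup_comm)
  · have hs : sSup s ≠ ⊥ ↔ ∃ b ∈ s, b ≠ ⊥ := by simp [sSup_eq_bot]
    simp only [hs, iSup_exists, iSup_and]

end SSupMaps

section Quantale

variable {α : Type*} [Quantale' α]

theorem Quantale'.isSSupHom_mul_left (a : α) : IsSSupHom (a * ·) :=
  Quantale'.mul_sSup_eq a

theorem Quantale'.isSSupHom_mul_right (a : α) : IsSSupHom (· * a) :=
  fun s => Quantale'.sSup_mul_eq s a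

end Quantale

def IsUniversalSSupBimorphism {A B T : Type u} [CompleteLattice A] [CompleteLattice B]
    [CompleteLattice T] (tmul : A → B → T) : Prop :=
  ∀ (S : Type u) [CompleteLattice S] (f : A → B → S), IsSSupBimorphism f →
    ∃! g : T → S, IsSSupHom g ∧ ∀ a b, g (tmul a b) = f a b

namespace IsUniversalSSupBimorphism

section

variable {A B T : Type u} [CompleteLattice A] [CompleteLattice B] [CompleteLattice T]
  {tmul : A → B → T}

theorem ext (huniv : IsUniversalSSupBimorphism tmul) (htmul : IsSSupBimorphism tmul)
    {S : Type u} [CompleteLattice S] {g₁ g₂ : T → S} (hg₁ : IsSSupHom g₁) (hg₂ : IsSSupHom g₂)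
    (h : ∀ a b, g₁ (tmul a b) = g₂ (tmul a b)) : g₁ = g₂ :=
  (huniv S _ (htmul.comp hg₁)).unique ⟨hg₁, fun _ _ => rfl⟩ ⟨hg₂, fun a b => (h a b).symm⟩

theorem le_of_forall_tmul_le (huniv : IsUniversalSSupBimorphism tmul)
    (htmul : IsSSupBimorphism tmul) {t : T} (ht : ∀ a b, tmul a b ≤ t) (x : T) : x ≤ t := by
  let f : A → B → Set.Iic t := fun a b => ⟨tmul a b, ht a b⟩
  have hf : IsSSupBimorphism f := by
    refine ⟨fun b s => Subtype.ext ?_, fun a s => Subtype.ext ?_⟩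
    · simp only [f, Set.Iic.coe_biSup, htmul.1 b s]
    · simp only [f, Set.Iic.coe_biSup, htmul.2 a s]
  obtain ⟨g, ⟨hg, hg_tmul⟩, -⟩ := huniv _ f hf
  have hval : IsSSupHom (Subtype.val ∘ g) := fun s => by
    simp only [Function.comp_apply, hg s, Set.Iic.coe_biSup]
  have hx : (g x : T) = x :=
    congrFun (huniv.ext htmul hval isSSupHom_id fun a b => congrArg Subtype.val (hg_tmul a b)) x
  exact hx ▸ (g x).2

theorem tmul_top_top (huniv : IsUniversalSSupBimorphism tmul) (htmul : IsSSupBimorphism tmul) :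
    tmul ⊤ ⊤ = ⊤ :=
  top_unique (huniv.le_of_forall_tmul_le htmul htmul.apply_le_top_top ⊤)

theorem injective_tmul_top (huniv : IsUniversalSSupBimorphism tmul) (htop : (⊤ : B) ≠ ⊥) :
    Function.Injective fun a => tmul a ⊤ := by
  obtain ⟨g, ⟨-, hg_tmul⟩, -⟩ := huniv A _ isSSupBimorphism_iSup_ne_bot
  intro a₁ a₂ h
  simpa only [hg_tmul, ciSup_pos htop] using congrArg g h

end

variable {Q T : Type u} [CompleteLattice Q] {tmul : Q → Q → T} {c : T → T}

theorem involutive_of_swap [CompleteLattice T] (huniv : IsUniversalSSupBimorphism tmul)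
    (htmul : IsSSupBimorphism tmul) (hc : IsSSupHom c) (hc_tmul : ∀ a b, c (tmul a b) = tmul b a)
    (x : T) : c (c x) = x :=
  congrFun (huniv.ext htmul (hc.comp hc) isSSupHom_id fun a b => by
    simp only [Function.comp_apply, hc_tmul, id]) x

theorem map_mul_of_swap [Mul Q] [Quantale' T] (huniv : IsUniversalSSupBimorphism tmul)
    (htmul : IsSSupBimorphism tmul)
    (hmul : ∀ a₁ b₁ a₂ b₂, tmul a₁ b₁ * tmul a₂ b₂ = tmul (a₁ * a₂) (b₂ * b₁))
    (hc : IsSSupHom c) (hc_tmul : ∀ a b, c (tmul a b) = tmul b a) (x y : T) :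
    c (x * y) = c y * c x := by
  have h_tmul_mul : ∀ a b y, c (tmul a b * y) = c y * c (tmul a b) := fun a b y =>
    congrFun (huniv.ext htmul (hc.comp (Quantale'.isSSupHom_mul_left _))
      ((Quantale'.isSSupHom_mul_right _).comp hc) fun a' b' => by
        simp only [Function.comp_apply, hmul, hc_tmul]) y
  exact congrFun (huniv.ext htmul (hc.comp (Quantale'.isSSupHom_mul_right y))
    ((Quantale'.isSSupHom_mul_left _).comp hc) fun a b => h_tmul_mul a b y) x

end IsUniversalSSupBimorphism

theorem stmt12_general {Q T : Type u} [Quantale' Q] [Quantale' T]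
    (tmul : Q → Q → T)
    (htmulL : ∀ (s : Set Q) (b : Q), tmul (sSup s) b = ⨆ a ∈ s, tmul a b)
    (htmulR : ∀ (a : Q) (s : Set Q), tmul a (sSup s) = ⨆ b ∈ s, tmul a b)
    (htmulMul : ∀ a₁ b₁ a₂ b₂ : Q,
      tmul a₁ b₁ * tmul a₂ b₂ = tmul (a₁ * a₂) (b₂ * b₁))
    (huniv : ∀ (S : Type u) [CompleteLattice S] (f : Q → Q → S),
      (∀ (s : Set Q) (b : Q), f (sSup s) b = ⨆ a ∈ s, f a b) →
      (∀ (a : Q) (s : Set Q), f a (sSup s) = ⨆ b ∈ s, f a b) →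
      ∃! g : T → S, (∀ s : Set T, g (sSup s) = ⨆ x ∈ s, g x) ∧ ∀ a b, g (tmul a b) = f a b) :
    (∃ c : T → T,
      (∀ a b : Q, c (tmul a b) = tmul b a) ∧
      (∀ s : Set T, c (sSup s) = ⨆ x ∈ s, c x) ∧
      (∀ x : T, c (c x) = x) ∧
      (∀ x y : T, c (x * y) = c y * c x)) ∧
    ((⊤ : Q) * ⊤ = ⊤ →
      Function.Injective (fun a : Q => tmul a ⊤) ∧
      (∀ a b : Q, tmul (a * b) ⊤ = tmul a ⊤ * tmul b ⊤) ∧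
      (∀ s : Set Q, tmul (sSup s) ⊤ = ⨆ a ∈ s, tmul a ⊤) ∧
      tmul (⊤ : Q) ⊤ = (⊤ : T)) := by
  have htmul : IsSSupBimorphism tmul := ⟨fun b s => htmulL s b, htmulR⟩
  have huniv' : IsUniversalSSupBimorphism tmul := fun S _ f hf =>
    huniv S f (fun s b => hf.1 b s) hf.2
  obtain ⟨c, ⟨hc, hc_tmul⟩, -⟩ := huniv' T _ htmul.flip
  refine ⟨⟨c, hc_tmul, hc, huniv'.involutive_of_swap htmul hc hc_tmul,
    huniv'.map_mul_of_swap htmul htmulMul hc hc_tmul⟩, fun hbal => ⟨?_,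
    fun a b => by rw [htmulMul, hbal], fun s => htmulL s ⊤, huniv'.tmul_top_top htmul⟩⟩
  rcases subsingleton_or_nontrivial Q with hQ | hQ
  · exact Function.injective_of_subsingleton _
  · exact huniv'.injective_tmul_top top_ne_bot

/-- For any quantale `Q`, the tensor product `T = Q ⊗ Q^op` (elementary
tensors multiply by `(α₁ ⊗ β₁) ⋆ (α₂ ⊗ β₂) = (α₁ * α₂) ⊗ (β₂ * β₁)`) is an involutive
quantale with involution the symmetry `c (α ⊗ β) = β ⊗ α`; and if `Q` is balanced
(`⊤ * ⊤ = ⊤`) then `α ↦ α ⊗ ⊤` is an injective, join-preserving, multiplicative,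
top-preserving quantale homomorphism of `Q` into this involutive quantale. -/
theorem stmt12 {Q T : Type u} [Quantale' Q] [Quantale' T]
    (tmul : Q → Q → T)
    (htmulL : ∀ (s : Set Q) (b : Q), tmul (sSup s) b = ⨆ a ∈ s, tmul a b)
    (htmulR : ∀ (a : Q) (s : Set Q), tmul a (sSup s) = ⨆ b ∈ s, tmul a b)
    (htmulMul : ∀ a₁ b₁ a₂ b₂ : Q,
      tmul a₁ b₁ * tmul a₂ b₂ = tmul (a₁ * a₂) (b₂ * b₁))
    (hgen : ∀ t : T, ∃ s : Set (Q × Q), t = ⨆ p ∈ s, tmul p.1 p.2)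
    (huniv : ∀ (S : Type u) [CompleteLattice S] (f : Q → Q → S),
      (∀ (s : Set Q) (b : Q), f (sSup s) b = ⨆ a ∈ s, f a b) →
      (∀ (a : Q) (s : Set Q), f a (sSup s) = ⨆ b ∈ s, f a b) →
      ∃! g : T → S, (∀ s : Set T, g (sSup s) = ⨆ x ∈ s, g x) ∧ ∀ a b, g (tmul a b) = f a b) :
    (∃ c : T → T,
      (∀ a b : Q, c (tmul a b) = tmul b a) ∧
      (∀ s : Set T, c (sSup s) = ⨆ x ∈ s, c x) ∧
      (∀ x : T, c (c x) = x) ∧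
      (∀ x y : T, c (x * y) = c y * c x)) ∧
    ((⊤ : Q) * ⊤ = ⊤ →
      Function.Injective (fun a : Q => tmul a ⊤) ∧
      (∀ a b : Q, tmul (a * b) ⊤ = tmul a ⊤ * tmul b ⊤) ∧
      (∀ s : Set Q, tmul (sSup s) ⊤ = ⨆ a ∈ s, tmul a ⊤) ∧
      tmul (⊤ : Q) ⊤ = (⊤ : T)) :=
  stmt12_general tmul htmulL htmulR htmulMul huniv
end

section
/- Let Q be a strongly spatial quantale and p a strongly prime element. Then the map h_p : Q → Q₂ defined by cases (h_p(α) = ⊥ if ⊤*α*⊤ ≤ p; = b if ⊤*α*⊤ ≰ p, α*⊤ ≤ p, ⊤*α ≤ p; = a_ℓ if α*⊤ ≰ p and ⊤*α ≤ p; = a_r if α*⊤ ≤ p and ⊤*α ≰ p; = c if α ≤ p, α*⊤ ≰ p, ⊤*α ≰ p; = ⊤ if α ≰ p) is a quantale homomorphism with h_p(⊤) = ⊤, assuming Q is semi-unital. -/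
/-!
For `l r : Bool`, let `sandwich l r α` be `α` with a factor `⊤` attached on the left if `l` and
on the right if `r`; the four conditions defining `h_p` are `sandwich l r α ≤ p`. Then
`h_p α` is the join of the generators `g l r` of `Q₂` (`g true true = b`, `g false true = a_ℓ`,
`g true false = a_r`, `g false false = ⊤`) over the `l, r` with `¬ sandwich l r α ≤ p`.
Sandwiching commutes with joins, so `h_p` preserves joins. Primality of `p` gives
`sandwich l r (x * y) ≤ p ↔ sandwich l true x ≤ p ∨ sandwich true r y ≤ p`, and semi-unitality
makes sandwiches grow when a side is covered; together they match the multiplication of the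
generators, which is a rectangular band: `g l r * g l' r' = g l r'`.
-/

instance {α : Type*} [Quantale' α] : IsQuantale α :=
  ⟨Quantale'.mul_sSup_eq, Quantale'.sSup_mul_eq⟩

section Prime

variable {Q : Type*} [Quantale' Q] {p : Q}

theorem IsStronglyPrime.isPrime (hp : IsStronglyPrime p) : IsPrime p :=
  ⟨hp.1, fun a b hab => (hp.2 a b hab).imp (le_trans le_sup_right) (le_trans le_sup_right)⟩

theorem IsPrime.mul_le_iff (hp : IsPrime p) {x y : Q} :
    x * y ≤ p ↔ x * ⊤ ≤ p ∨ ⊤ * y ≤ p :=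
  ⟨hp.2 x y, fun h => h.elim (le_trans (mul_le_mul_right le_top x))
    (le_trans (mul_le_mul_left le_top y))⟩

end Prime

namespace Quantale'

open Quantale

variable {Q : Type*} [Quantale' Q]

def sandwich : Bool → Bool → Q → Q
  | true, true, a => ⊤ * a * ⊤
  | true, false, a => ⊤ * a
  | false, true, a => a * ⊤
  | false, false, a => a

theorem sandwich_mul (l r : Bool) (x y : Q) :
    sandwich l r (x * y) = sandwich l false x * sandwich false r y := by
  cases l <;> cases r <;> simp only [sandwich, mul_assoc]

theorem sandwich_true_right (l : Bool) (x : Q) : sandwich l true x = sandwich l false x * ⊤ := by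
  cases l <;> rfl

theorem sandwich_true_left (r : Bool) (x : Q) : sandwich true r x = ⊤ * sandwich false r x := by
  cases r <;> simp only [sandwich, mul_assoc]

theorem sandwich_mul_le_iff {p : Q} (hp : IsPrime p) (l r : Bool) (x y : Q) :
    sandwich l r (x * y) ≤ p ↔ sandwich l true x ≤ p ∨ sandwich true r y ≤ p := by
  rw [sandwich_mul, sandwich_true_right, sandwich_true_left, hp.mul_le_iff]

theorem sandwich_sSup_le_iff (l r : Bool) {s : Set Q} {p : Q} :
    sandwich l r (sSup s) ≤ p ↔ ∀ a ∈ s, sandwich l r a ≤ p := by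
  have : sandwich l r (sSup s) = ⨆ a : s, sandwich l r (a : Q) := by
    cases l <;> cases r <;>
      simp only [sandwich, sSup_eq_iSup', mul_iSup_distrib, iSup_mul_distrib]
  rw [this, iSup_le_iff, Subtype.forall]

theorem sandwich_le_sandwich_true_left (hQ : SemiUnital Q) (l r : Bool) (a : Q) :
    sandwich l r a ≤ sandwich true r a := by
  cases l
  · exact sandwich_true_left r a ▸ (hQ _).1
  · rfl

theorem sandwich_le_sandwich_true_right (hQ : SemiUnital Q) (l r : Bool) (a : Q) :
    sandwich l r a ≤ sandwich l true a := by
  cases r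
  · exact sandwich_true_right l a ▸ (hQ _).2
  · rfl

variable {R : Type*} [Quantale' R]

noncomputable def primeMap (g : Bool → Bool → R) (p a : Q) : R :=
  ⨆ (l : Bool) (r : Bool) (_ : ¬ sandwich l r a ≤ p), g l r

theorem le_primeMap {g : Bool → Bool → R} {p a : Q} {l r : Bool} (h : ¬ sandwich l r a ≤ p) :
    g l r ≤ primeMap g p a :=
  le_iSup₂_of_le l r (le_iSup_of_le h le_rfl)

theorem primeMap_le_iff {g : Bool → Bool → R} {p a : Q} {v : R} :
    primeMap g p a ≤ v ↔ ∀ l r, ¬ sandwich l r a ≤ p → g l r ≤ v := by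
  simp only [primeMap, iSup_le_iff]

theorem primeMap_eq (g : Bool → Bool → R) (p a : Q) :
    primeMap g p a = (⨆ (_ : ¬ ⊤ * a * ⊤ ≤ p), g true true) ⊔ (⨆ (_ : ¬ ⊤ * a ≤ p), g true false) ⊔
      ((⨆ (_ : ¬ a * ⊤ ≤ p), g false true) ⊔ ⨆ (_ : ¬ a ≤ p), g false false) := by
  simp only [primeMap, iSup_bool_eq, sandwich]

theorem primeMap_sSup (g : Bool → Bool → R) (p : Q) (s : Set Q) :
    primeMap g p (sSup s) = ⨆ a ∈ s, primeMap g p a := by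
  refine le_antisymm (primeMap_le_iff.2 fun l r h => ?_) (iSup₂_le fun a ha => ?_)
  · obtain ⟨a, ha, hla⟩ : ∃ a ∈ s, ¬ sandwich l r a ≤ p := by
      simpa only [sandwich_sSup_le_iff, not_forall, exists_prop] using h
    exact le_iSup₂_of_le a ha (le_primeMap hla)
  · exact primeMap_le_iff.2 fun l r h => le_primeMap fun hs =>
      h ((sandwich_sSup_le_iff l r).1 hs a ha)

theorem primeMap_mul (hQ : SemiUnital Q) {p : Q} (hp : IsPrime p) {g : Bool → Bool → R}
    (hg : ∀ l r l' r', g l r * g l' r' = g l r') (x y : Q) :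
    primeMap g p (x * y) = primeMap g p x * primeMap g p y := by
  refine le_antisymm (primeMap_le_iff.2 fun l r h => ?_) ?_
  · rw [sandwich_mul_le_iff hp, not_or] at h
    rw [← hg l true true r]
    exact mul_le_mul' (le_primeMap h.1) (le_primeMap h.2)
  · rw [← leftMulResiduation_le_iff_mul_le]
    refine primeMap_le_iff.2 fun l r hx => ?_
    rw [leftMulResiduation_le_iff_mul_le, ← rightMulResiduation_le_iff_mul_le]
    refine primeMap_le_iff.2 fun l' r' hy => ?_
    rw [rightMulResiduation_le_iff_mul_le, hg]
    refine le_primeMap ?_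
    rw [sandwich_mul_le_iff hp, not_or]
    exact ⟨fun h => hx ((sandwich_le_sandwich_true_right hQ l r x).trans h),
      fun h => hy ((sandwich_le_sandwich_true_left hQ l' r' y).trans h)⟩

end Quantale'

theorem stmt16_general {Q : Type*} [Quantale' Q] {Q2 : Type*} [Quantale' Q2]
    (b al ar c : Q2)
    (hsup : al ⊔ ar = c) (hinf : al ⊓ ar = b)
    (t1 : b * b = b) (t2 : b * al = b) (t3 : b * ar = ar)
    (t5 : b * ⊤ = ar)
    (t6 : al * b = al) (t7 : al * al = al) (t8 : al * ar = ⊤)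
    (t10 : al * ⊤ = ⊤)
    (t11 : ar * b = b) (t12 : ar * al = b) (t13 : ar * ar = ar)
    (t15 : ar * ⊤ = ar)
    (t21 : ⊤ * b = al) (t22 : ⊤ * al = al) (t23 : ⊤ * ar = ⊤)
    (t25 : (⊤ : Q2) * ⊤ = ⊤)
    (hsu : SemiUnital Q)
    (p : Q) (hp : IsStronglyPrime p) :
    ∃ h : Q → Q2,
      (∀ α : Q, ⊤ * α * ⊤ ≤ p → h α = ⊥) ∧
      (∀ α : Q, ¬ ⊤ * α * ⊤ ≤ p → α * ⊤ ≤ p → ⊤ * α ≤ p → h α = b) ∧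
      (∀ α : Q, ¬ α * ⊤ ≤ p → ⊤ * α ≤ p → h α = al) ∧
      (∀ α : Q, α * ⊤ ≤ p → ¬ ⊤ * α ≤ p → h α = ar) ∧
      (∀ α : Q, α ≤ p → ¬ α * ⊤ ≤ p → ¬ ⊤ * α ≤ p → h α = c) ∧
      (∀ α : Q, ¬ α ≤ p → h α = ⊤) ∧
      (∀ s : Set Q, h (sSup s) = ⨆ a ∈ s, h a) ∧
      (∀ x y : Q, h (x * y) = h x * h y) ∧
      h (⊤ : Q) = ⊤ := by
  have hbal : b ≤ al := hinf ▸ inf_le_left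
  have hbar : b ≤ ar := hinf ▸ inf_le_right
  have le_of_mul_top (α : Q) : α * ⊤ ≤ p → α ≤ p :=
    (Quantale'.sandwich_le_sandwich_true_right hsu false false α).trans
  have le_of_top_mul (α : Q) : ⊤ * α ≤ p → α ≤ p :=
    (Quantale'.sandwich_le_sandwich_true_left hsu false false α).trans
  have mul_top_le (α : Q) : ⊤ * α * ⊤ ≤ p → α * ⊤ ≤ p :=
    (Quantale'.sandwich_le_sandwich_true_left hsu false true α).trans
  have top_mul_le (α : Q) : ⊤ * α * ⊤ ≤ p → ⊤ * α ≤ p :=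
    (Quantale'.sandwich_le_sandwich_true_right hsu true false α).trans
  refine ⟨Quantale'.primeMap (fun l r => bif l then (bif r then b else ar) else (bif r then al else ⊤)) p,
    fun α h0 => ?_, fun α h0 h2 h3 => ?_, fun α h2 h3 => ?_, fun α h2 h3 => ?_,
    fun α h1 h2 h3 => ?_, fun α h1 => ?_, Quantale'.primeMap_sSup _ p,
    Quantale'.primeMap_mul hsu hp.isPrime fun l r l' r' => ?_, ?_⟩
  · simp [Quantale'.primeMap_eq, h0, mul_top_le α h0, top_mul_le α h0, le_of_mul_top α (mul_top_le α h0)]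
  · simp [Quantale'.primeMap_eq, h0, h2, h3, le_of_mul_top α h2]
  · simp [Quantale'.primeMap_eq, h2, h3, le_of_top_mul α h3, mt (mul_top_le α) h2, hbal]
  · simp [Quantale'.primeMap_eq, h2, h3, le_of_mul_top α h2, mt (top_mul_le α) h3, hbar]
  · simp [Quantale'.primeMap_eq, h1, h2, h3, mt (mul_top_le α) h2, hbar, ← hsup, sup_comm]
  · simp [Quantale'.primeMap_eq, h1, mt (le_of_mul_top α) h1, mt (le_of_top_mul α) h1,
      mt (mul_top_le α) (mt (le_of_mul_top α) h1)]
  · cases l <;> cases r <;> cases l' <;> cases r' <;> assumption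
  · simp [Quantale'.primeMap_eq, hp.1]

/-- For a strongly spatial (hence semi-unital) quantale `Q` and a
strongly prime element `p`, the case-defined map `h_p : Q → Q₂` is a quantale
homomorphism with `h_p ⊤ = ⊤`. -/
theorem stmt16 {Q : Type*} [Quantale' Q] {Q2 : Type*} [Quantale' Q2]
    (b al ar c : Q2)
    (hbot_b : ⊥ < b) (hb_al : b < al) (hb_ar : b < ar)
    (hsup : al ⊔ ar = c) (hinf : al ⊓ ar = b) (hc_top : c < ⊤)
    (hincomp : ¬ al ≤ ar ∧ ¬ ar ≤ al)
    (helts : ∀ x : Q2, x = ⊥ ∨ x = b ∨ x = al ∨ x = ar ∨ x = c ∨ x = ⊤)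
    (t1 : b * b = b) (t2 : b * al = b) (t3 : b * ar = ar) (t4 : b * c = ar)
    (t5 : b * ⊤ = ar)
    (t6 : al * b = al) (t7 : al * al = al) (t8 : al * ar = ⊤) (t9 : al * c = ⊤)
    (t10 : al * ⊤ = ⊤)
    (t11 : ar * b = b) (t12 : ar * al = b) (t13 : ar * ar = ar) (t14 : ar * c = ar)
    (t15 : ar * ⊤ = ar)
    (t16 : c * b = al) (t17 : c * al = al) (t18 : c * ar = ⊤) (t19 : c * c = ⊤)
    (t20 : c * ⊤ = ⊤)
    (t21 : ⊤ * b = al) (t22 : ⊤ * al = al) (t23 : ⊤ * ar = ⊤) (t24 : ⊤ * c = ⊤)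
    (t25 : (⊤ : Q2) * ⊤ = ⊤)
    (tbot : ∀ x : Q2, ⊥ * x = ⊥ ∧ x * ⊥ = ⊥)
    (hss : StronglySpatial Q) (hsu : SemiUnital Q)
    (p : Q) (hp : IsStronglyPrime p) :
    ∃ h : Q → Q2,
      (∀ α : Q, ⊤ * α * ⊤ ≤ p → h α = ⊥) ∧
      (∀ α : Q, ¬ ⊤ * α * ⊤ ≤ p → α * ⊤ ≤ p → ⊤ * α ≤ p → h α = b) ∧
      (∀ α : Q, ¬ α * ⊤ ≤ p → ⊤ * α ≤ p → h α = al) ∧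
      (∀ α : Q, α * ⊤ ≤ p → ¬ ⊤ * α ≤ p → h α = ar) ∧
      (∀ α : Q, α ≤ p → ¬ α * ⊤ ≤ p → ¬ ⊤ * α ≤ p → h α = c) ∧
      (∀ α : Q, ¬ α ≤ p → h α = ⊤) ∧
      (∀ s : Set Q, h (sSup s) = ⨆ a ∈ s, h a) ∧
      (∀ x y : Q, h (x * y) = h x * h y) ∧
      h (⊤ : Q) = ⊤ :=
  stmt16_general b al ar c hsup hinf t1 t2 t3 t5 t6 t7 t8 t10 t11 t12 t13 t15 t21 t22 t23 t25 hsu p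
    hp
end
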